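/- Let n, m be positive integers and N = n(n-1)/2 + n(n+1)/2 + nm. Identify the real vector space PHT_{n,m} of triples (J,H,B), with J an n×n skew-symmetric real matrix, H an n×n symmetric real matrix and B ∈ ℝ^{n×m}, with ℝ^N via the coordinates J_{ij} (i<j), H_{ij} (i≤j), and the entries of B. Then the set S = {(J,H,B) ∈ PHT_{n,m} : the pair (JH,B) is controllable}, viewed as a subset of ℝ^N, is the complement of a proper algebraic variety in ℝ^N; in particular S is a nonempty generic subset of ℝ^N. -/

import Mathlib

open Set Matrix

/-- An algebraic variety in `𝕜^N`: the common zero locus of finitely many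
polynomials in `N` indeterminates. -/
def IsAlgebraicVariety {𝕜 : Type*} [CommSemiring 𝕜] {N : ℕ} (W : Set (Fin N → 𝕜)) : Prop :=
  ∃ (k : ℕ) (p : Fin k → MvPolynomial (Fin N) 𝕜),
    W = {x | ∀ i, MvPolynomial.eval x (p i) = 0}

/-- A proper algebraic variety in `𝕜^N`. -/
def IsProperAlgebraicVariety {𝕜 : Type*} [CommSemiring 𝕜] {N : ℕ} (W : Set (Fin N → 𝕜)) : Prop :=
  IsAlgebraicVariety W ∧ W ≠ Set.univ

/-- A generic set: the complement is contained in a proper algebraic variety. -/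
def IsGeneric {𝕜 : Type*} [CommSemiring 𝕜] {N : ℕ} (S : Set (Fin N → 𝕜)) : Prop :=
  ∃ W : Set (Fin N → 𝕜), IsProperAlgebraicVariety W ∧ Sᶜ ⊆ W

/-- `S` is relative generic in `V`: there is a proper algebraic variety `W` with
`V ∩ Sᶜ ⊆ W` and `V ∩ Wᶜ` dense in `V`. -/
def IsRelativeGeneric {𝕜 : Type*} [RCLike 𝕜] {N : ℕ} (S V : Set (Fin N → 𝕜)) : Prop :=
  ∃ W : Set (Fin N → 𝕜), IsProperAlgebraicVariety W ∧ V ∩ Sᶜ ⊆ W ∧ V ⊆ closure (V ∩ Wᶜ)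

/-- The Kalman matrix `[B, AB, …, A^{n-1}B]` of the pair `(A, B)`. -/
def kalmanMatrix {n m : ℕ} (A : Matrix (Fin n) (Fin n) ℝ) (B : Matrix (Fin n) (Fin m) ℝ) :
    Matrix (Fin n) (Fin n × Fin m) ℝ :=
  Matrix.of fun i p => (A ^ (p.1 : ℕ) * B) i p.2

/-- The pair `(A, B)` is controllable iff its Kalman matrix has rank `n`. -/
def Controllable {n m : ℕ} (A : Matrix (Fin n) (Fin n) ℝ)
    (B : Matrix (Fin n) (Fin m) ℝ) : Prop :=
  (kalmanMatrix A B).rank = n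

/-- The ambient space of matrix triples `(J, H, B)`. -/
abbrev MatrixTriple (n m : ℕ) :=
  Matrix (Fin n) (Fin n) ℝ × Matrix (Fin n) (Fin n) ℝ × Matrix (Fin n) (Fin m) ℝ

/-- The subspace `PHT_{n,m}` of triples `(J,H,B)` with `J` skew-symmetric and
`H` symmetric. -/
def PHT (n m : ℕ) : Submodule ℝ (MatrixTriple n m) where
  carrier := {x | (x.1)ᵀ = -x.1 ∧ (x.2.1)ᵀ = x.2.1}
  add_mem' := by
    rintro ⟨J, H, B⟩ ⟨J', H', B'⟩ ⟨h1, h2⟩ ⟨h1', h2'⟩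
    refine ⟨?_, ?_⟩ <;> simp_all [Matrix.transpose_add] <;> abel
  zero_mem' := by refine ⟨?_, ?_⟩ <;> simp
  smul_mem' := by
    rintro c ⟨J, H, B⟩ ⟨h1, h2⟩
    refine ⟨?_, ?_⟩ <;> simp_all [Matrix.transpose_smul]


/-! ### Auxiliary machinery -/

section Aux
variable {N : ℕ}

noncomputable def linPoly (ℓ : (Fin N → ℝ) →ₗ[ℝ] ℝ) : MvPolynomial (Fin N) ℝ :=
  ∑ i, MvPolynomial.C (ℓ (Pi.single i 1)) * MvPolynomial.X i

lemma eval_linPoly (ℓ : (Fin N → ℝ) →ₗ[ℝ] ℝ) (x : Fin N → ℝ) :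
    MvPolynomial.eval x (linPoly ℓ) = ℓ x := by
  rw [LinearMap.pi_apply_eq_sum_univ ℓ x, linPoly]
  simp only [map_sum, _root_.map_mul, MvPolynomial.eval_C, MvPolynomial.eval_X, smul_eq_mul]
  refine Finset.sum_congr rfl fun i _ => ?_
  rw [mul_comm]
  congr 1
  congr 1
  ext j
  simp [Pi.single_apply, eq_comm]

lemma rank_eq_card_iff_det_ne_zero {n : ℕ} (M : Matrix (Fin n) (Fin n) ℝ) :
    M.rank = n ↔ M.det ≠ 0 := by
  constructor
  · intro h hdet
    obtain ⟨v, hv, hMv⟩ := (Matrix.exists_mulVec_eq_zero_iff).2 hdet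
    have hsurj : LinearMap.range M.mulVecLin = ⊤ := by
      apply Submodule.eq_top_of_finrank_eq
      simpa [Matrix.rank] using h
    have hinj : Function.Injective M.mulVecLin :=
      LinearMap.injective_iff_surjective.2 (LinearMap.range_eq_top.1 hsurj)
    exact hv (hinj (by simpa using hMv))
  · intro h
    have : IsUnit M := (Matrix.isUnit_iff_isUnit_det M).2 (isUnit_iff_ne_zero.2 h)
    simpa using Matrix.rank_of_isUnit M this

end Aux


section Poly
variable {n m N : ℕ}

/-- Projection to an entry of `J`, as a linear map. -/
def projJ (i j : Fin n) : ↥(PHT n m) →ₗ[ℝ] ℝ where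
  toFun x := ((x : MatrixTriple n m)).1 i j
  map_add' := by intros; simp
  map_smul' := by intros; simp

/-- Projection to an entry of `H`, as a linear map. -/
def projH (i j : Fin n) : ↥(PHT n m) →ₗ[ℝ] ℝ where
  toFun x := ((x : MatrixTriple n m)).2.1 i j
  map_add' := by intros; simp
  map_smul' := by intros; simp

/-- Projection to an entry of `B`, as a linear map. -/
def projB (i : Fin n) (j : Fin m) : ↥(PHT n m) →ₗ[ℝ] ℝ where
  toFun x := ((x : MatrixTriple n m)).2.2 i j
  map_add' := by intros; simp
  map_smul' := by intros; simp

variable (T : ↥(PHT n m) ≃ₗ[ℝ] (Fin N → ℝ))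

noncomputable def Jpoly : Matrix (Fin n) (Fin n) (MvPolynomial (Fin N) ℝ) :=
  Matrix.of fun i j => linPoly ((projJ i j).comp (T.symm : (Fin N → ℝ) →ₗ[ℝ] ↥(PHT n m)))

noncomputable def Hpoly : Matrix (Fin n) (Fin n) (MvPolynomial (Fin N) ℝ) :=
  Matrix.of fun i j => linPoly ((projH i j).comp (T.symm : (Fin N → ℝ) →ₗ[ℝ] ↥(PHT n m)))

noncomputable def Bpoly : Matrix (Fin n) (Fin m) (MvPolynomial (Fin N) ℝ) :=
  Matrix.of fun i j => linPoly ((projB i j).comp (T.symm : (Fin N → ℝ) →ₗ[ℝ] ↥(PHT n m)))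

noncomputable def Kpoly : Matrix (Fin n) (Fin n × Fin m) (MvPolynomial (Fin N) ℝ) :=
  Matrix.of fun i p => ((Jpoly T * Hpoly T) ^ (p.1 : ℕ) * Bpoly T) i p.2

noncomputable def Ppoly : MvPolynomial (Fin N) ℝ :=
  (Kpoly T * (Kpoly T)ᵀ).det

lemma map_Jpoly (x : Fin N → ℝ) :
    (Jpoly T).map (MvPolynomial.eval x) = ((T.symm x : ↥(PHT n m)) : MatrixTriple n m).1 := by
  ext i j
  simp [Jpoly, Matrix.map_apply, eval_linPoly, projJ]
  rfl

lemma map_Hpoly (x : Fin N → ℝ) :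
    (Hpoly T).map (MvPolynomial.eval x) = ((T.symm x : ↥(PHT n m)) : MatrixTriple n m).2.1 := by
  ext i j
  simp [Hpoly, Matrix.map_apply, eval_linPoly, projH]
  rfl

lemma map_Bpoly (x : Fin N → ℝ) :
    (Bpoly T).map (MvPolynomial.eval x) = ((T.symm x : ↥(PHT n m)) : MatrixTriple n m).2.2 := by
  ext i j
  simp [Bpoly, Matrix.map_apply, eval_linPoly, projB]
  rfl

lemma map_Kpoly (x : Fin N → ℝ) :
    (Kpoly T).map (MvPolynomial.eval x) =
      kalmanMatrix
        (((T.symm x : ↥(PHT n m)) : MatrixTriple n m).1 *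
          ((T.symm x : ↥(PHT n m)) : MatrixTriple n m).2.1)
        ((T.symm x : ↥(PHT n m)) : MatrixTriple n m).2.2 := by
  set e : MvPolynomial (Fin N) ℝ →+* ℝ := MvPolynomial.eval x
  have hpow : ∀ k : ℕ, ((Jpoly T * Hpoly T) ^ k).map e =
      (((T.symm x : ↥(PHT n m)) : MatrixTriple n m).1 *
        ((T.symm x : ↥(PHT n m)) : MatrixTriple n m).2.1) ^ k := by
    intro k
    have := map_pow (e.mapMatrix (m := Fin n)) (Jpoly T * Hpoly T) k
    simp only [RingHom.mapMatrix_apply] at this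
    rw [this, Matrix.map_mul, map_Jpoly, map_Hpoly]
  ext i p
  simp only [Kpoly, kalmanMatrix, Matrix.map_apply, Matrix.of_apply]
  have : ((((Jpoly T * Hpoly T) ^ (p.1 : ℕ)) * Bpoly T).map e) i p.2 =
      e ((((Jpoly T * Hpoly T) ^ (p.1 : ℕ)) * Bpoly T) i p.2) := rfl
  rw [← this, Matrix.map_mul, hpow, map_Bpoly]

lemma eval_Ppoly (x : Fin N → ℝ) :
    MvPolynomial.eval x (Ppoly T) =
      (kalmanMatrix
        (((T.symm x : ↥(PHT n m)) : MatrixTriple n m).1 *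
          ((T.symm x : ↥(PHT n m)) : MatrixTriple n m).2.1)
        ((T.symm x : ↥(PHT n m)) : MatrixTriple n m).2.2 *
       (kalmanMatrix
        (((T.symm x : ↥(PHT n m)) : MatrixTriple n m).1 *
          ((T.symm x : ↥(PHT n m)) : MatrixTriple n m).2.1)
        ((T.symm x : ↥(PHT n m)) : MatrixTriple n m).2.2)ᵀ).det := by
  set e : MvPolynomial (Fin N) ℝ →+* ℝ := MvPolynomial.eval x
  have : MvPolynomial.eval x (Ppoly T) = ((Kpoly T * (Kpoly T)ᵀ).map e).det :=
    (RingHom.map_det e _)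
  rw [this, Matrix.map_mul]
  rw [show ((Kpoly T)ᵀ).map e = ((Kpoly T).map e)ᵀ from (Matrix.transpose_map).symm]
  rw [map_Kpoly]

lemma controllable_iff_eval_ne (x : Fin N → ℝ) :
    Controllable
      (((T.symm x : ↥(PHT n m)) : MatrixTriple n m).1 *
        ((T.symm x : ↥(PHT n m)) : MatrixTriple n m).2.1)
      ((T.symm x : ↥(PHT n m)) : MatrixTriple n m).2.2 ↔
      MvPolynomial.eval x (Ppoly T) ≠ 0 := by
  rw [eval_Ppoly, ← rank_eq_card_iff_det_ne_zero, Matrix.rank_self_mul_transpose]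
  rfl

end Poly


section Witness
variable {n m : ℕ}

/-- Skew-symmetric tridiagonal witness matrix. -/
def J0 (n : ℕ) : Matrix (Fin n) (Fin n) ℝ :=
  Matrix.of fun i j => if (j : ℕ) = (i : ℕ) + 1 then 1 else
    if (i : ℕ) = (j : ℕ) + 1 then -1 else 0

/-- Witness input matrix: `e₀` in the first column. -/
def B0 (n m : ℕ) : Matrix (Fin n) (Fin m) ℝ :=
  Matrix.of fun i j => if (i : ℕ) = 0 ∧ (j : ℕ) = 0 then 1 else 0

lemma J0_skew : (J0 n)ᵀ = -(J0 n) := by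
  ext i j
  simp only [J0, Matrix.transpose_apply, Matrix.neg_apply, Matrix.of_apply]
  split_ifs <;> first | omega | norm_num

lemma J0_pow (hn : 0 < n) (k : ℕ) (hk : k < n) :
    ∀ i : Fin n, k ≤ (i : ℕ) →
      (J0 n ^ k) i ⟨0, hn⟩ = if (i : ℕ) = k then (-1 : ℝ) ^ k else 0 := by
  induction k with
  | zero =>
    intro i _
    simp [Matrix.one_apply, Fin.ext_iff]
  | succ k IH =>
    intro i hi
    have hkn : k < n := Nat.lt_of_succ_lt hk
    set jk : Fin n := ⟨k, hkn⟩ with hjk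
    rw [pow_succ', Matrix.mul_apply]
    rw [Finset.sum_eq_single jk]
    · have hv : (J0 n ^ k) jk ⟨0, hn⟩ = (-1 : ℝ) ^ k := by
        rw [IH hkn jk le_rfl, if_pos rfl]
      rw [hv]
      by_cases hik : (i : ℕ) = k + 1
      · have h1 : J0 n i jk = -1 := by
          simp only [J0, Matrix.of_apply, hjk]
          rw [if_neg (by omega), if_pos (by omega)]
        rw [h1, if_pos hik]
        ring
      · have h1 : J0 n i jk = 0 := by
          simp only [J0, Matrix.of_apply, hjk]
          rw [if_neg (by omega), if_neg (by omega)]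
        rw [h1, if_neg hik, zero_mul]
    · intro j _ hj
      have hjne : (j : ℕ) ≠ k := fun h => hj (Fin.ext h)
      by_cases h1 : (j : ℕ) = (i : ℕ) + 1
      · rw [IH hkn j (by omega), if_neg hjne, mul_zero]
      · by_cases h2 : (i : ℕ) = (j : ℕ) + 1
        · rw [IH hkn j (by omega), if_neg hjne, mul_zero]
        · have : J0 n i j = 0 := by
            simp only [J0, Matrix.of_apply]
            rw [if_neg h1, if_neg h2]
          rw [this, zero_mul]
    · intro h
      exact absurd (Finset.mem_univ jk) h

lemma controllable_witness (hn : 0 < n) (hm : 0 < m) :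
    Controllable (J0 n) (B0 n m) := by
  set K := kalmanMatrix (J0 n) (B0 n m) with hK
  set E : Matrix (Fin n × Fin m) (Fin n) ℝ :=
    Matrix.of fun p k => if p = (k, ⟨0, hm⟩) then 1 else 0 with hE
  set M := K * E with hMdef
  have hM : ∀ i k : Fin n, M i k = (J0 n ^ (k : ℕ)) i ⟨0, hn⟩ := by
    intro i k
    rw [hMdef, Matrix.mul_apply]
    rw [Finset.sum_eq_single ((k, ⟨0, hm⟩) : Fin n × Fin m)]
    · have : E (k, ⟨0, hm⟩) k = 1 := by simp [hE]
      rw [this, mul_one, hK]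
      show (J0 n ^ (k : ℕ) * B0 n m) i ⟨0, hm⟩ = _
      rw [Matrix.mul_apply]
      rw [Finset.sum_eq_single (⟨0, hn⟩ : Fin n)]
      · have : B0 n m ⟨0, hn⟩ ⟨0, hm⟩ = 1 := by simp [B0]
        rw [this, mul_one]
      · intro j _ hj
        have : B0 n m j ⟨0, hm⟩ = 0 := by
          simp only [B0, Matrix.of_apply]
          rw [if_neg]
          intro hc
          exact hj (Fin.ext hc.1)
        rw [this, mul_zero]
      · intro h; exact absurd (Finset.mem_univ _) h
    · intro p _ hp
      have : E p k = 0 := by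
        simp only [hE, Matrix.of_apply]
        rw [if_neg hp]
      rw [this, mul_zero]
    · intro h; exact absurd (Finset.mem_univ _) h
  have htri : M.BlockTriangular id := by
    intro i k h
    have hki : (k : ℕ) < (i : ℕ) := h
    rw [hM i k, J0_pow hn (k : ℕ) k.isLt i (le_of_lt hki), if_neg (by omega)]
  have hdiag : ∀ k : Fin n, M k k = (-1 : ℝ) ^ (k : ℕ) := by
    intro k
    rw [hM k k, J0_pow hn (k : ℕ) k.isLt k le_rfl, if_pos rfl]
  have hdet : M.det ≠ 0 := by
    rw [Matrix.det_of_upperTriangular htri]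
    apply Finset.prod_ne_zero_iff.2
    intro k _
    rw [hdiag k]
    positivity
  have hMrank : M.rank = n := (rank_eq_card_iff_det_ne_zero M).2 hdet
  have h1 : (n : ℕ) ≤ K.rank := by
    calc n = M.rank := hMrank.symm
    _ ≤ K.rank := Matrix.rank_mul_le_left K E
  have h2 : K.rank ≤ n := by
    simpa using Matrix.rank_le_card_height K
  exact le_antisymm h2 h1

end Witness

/-- The set of triples `(J,H,B) ∈ PHT_{n,m}` with `(JH, B)` controllable, viewed
as a subset of `ℝ^N` via the coordinate isomorphism `T`, is the complement of a
proper algebraic variety; in particular it is nonempty and generic. -/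
theorem controllable_compl_properVariety (n m : ℕ) (hn : 0 < n) (hm : 0 < m)
    (N : ℕ) (hN : N = n * (n - 1) / 2 + n * (n + 1) / 2 + n * m)
    (T : ↥(PHT n m) ≃ₗ[ℝ] (Fin N → ℝ)) :
    (∃ W : Set (Fin N → ℝ), IsProperAlgebraicVariety W ∧
      (fun x : ↥(PHT n m) => T x) ''
        {x : ↥(PHT n m) | Controllable
          ((x : MatrixTriple n m).1 * (x : MatrixTriple n m).2.1)
          (x : MatrixTriple n m).2.2} = Wᶜ) ∧
    ((fun x : ↥(PHT n m) => T x) ''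
      {x : ↥(PHT n m) | Controllable
        ((x : MatrixTriple n m).1 * (x : MatrixTriple n m).2.1)
        (x : MatrixTriple n m).2.2}).Nonempty ∧
    IsGeneric ((fun x : ↥(PHT n m) => T x) ''
      {x : ↥(PHT n m) | Controllable
        ((x : MatrixTriple n m).1 * (x : MatrixTriple n m).2.1)
        (x : MatrixTriple n m).2.2}) := by
  classical
  have hmem : ∀ x : Fin N → ℝ,
      x ∈ (fun x : ↥(PHT n m) => T x) ''
        {x : ↥(PHT n m) | Controllable
          ((x : MatrixTriple n m).1 * (x : MatrixTriple n m).2.1)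
          (x : MatrixTriple n m).2.2} ↔ MvPolynomial.eval x (Ppoly T) ≠ 0 := by
    intro x
    constructor
    · rintro ⟨a, ha, rfl⟩
      refine (controllable_iff_eval_ne T (T a)).1 ?_
      simpa using ha
    · intro h
      exact ⟨T.symm x, (controllable_iff_eval_ne T x).2 h, by simp⟩
  set W : Set (Fin N → ℝ) :=
    {x | ∀ _i : Fin 1, MvPolynomial.eval x (Ppoly T) = 0} with hWdef
  have hWmem : ∀ x, x ∈ W ↔ MvPolynomial.eval x (Ppoly T) = 0 :=
    fun x => ⟨fun h => h 0, fun h _ => h⟩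
  have himg : (fun x : ↥(PHT n m) => T x) ''
      {x : ↥(PHT n m) | Controllable
        ((x : MatrixTriple n m).1 * (x : MatrixTriple n m).2.1)
        (x : MatrixTriple n m).2.2} = Wᶜ := by
    ext x
    rw [hmem x, Set.mem_compl_iff, hWmem x]
  have hJ0 : ((J0 n, (1 : Matrix (Fin n) (Fin n) ℝ), B0 n m) : MatrixTriple n m) ∈ PHT n m :=
    ⟨J0_skew, Matrix.transpose_one⟩
  set x0 : ↥(PHT n m) := ⟨_, hJ0⟩ with hx0def
  have hx0 : x0 ∈ {x : ↥(PHT n m) | Controllable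
      ((x : MatrixTriple n m).1 * (x : MatrixTriple n m).2.1)
      (x : MatrixTriple n m).2.2} := by
    show Controllable (J0 n * 1) (B0 n m)
    rw [mul_one]
    exact controllable_witness hn hm
  have hne : ((fun x : ↥(PHT n m) => T x) ''
      {x : ↥(PHT n m) | Controllable
        ((x : MatrixTriple n m).1 * (x : MatrixTriple n m).2.1)
        (x : MatrixTriple n m).2.2}).Nonempty := ⟨T x0, x0, hx0, rfl⟩
  have hWproper : W ≠ Set.univ := by
    intro h
    have h1 : T x0 ∈ Wᶜ := himg ▸ ⟨x0, hx0, rfl⟩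
    rw [h] at h1
    exact h1 (Set.mem_univ _)
  have hvar : IsProperAlgebraicVariety W :=
    ⟨⟨1, fun _ => Ppoly T, rfl⟩, hWproper⟩
  refine ⟨⟨W, hvar, himg⟩, hne, W, hvar, ?_⟩
  rw [himg, compl_compl]
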